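/- arXiv:math/0609637 — 5 statements merged into one kernel-verified Lean document; each statement's English description precedes it below -/
import Mathlib

section
/- Let G be a torsion-free abelian group and p a prime such that G/p^ωG is free, where p^ωG = ⋂_{n<ω} p^nG. Then G decomposes as G = p^ωG ⊕ F for some free abelian group F, and Ext^1_ℤ(G, ℤ)[p] = 0. -/
open CategoryTheory
open scoped TensorProduct Pointwise

/-- `Ext¹_ℤ(G, ℤ)` as an object of `ModuleCat ℤ`. -/
noncomputable def Ext1 (G : Type) [AddCommGroup G] : ModuleCat ℤ :=
  ((Ext ℤ (ModuleCat ℤ) 1).obj (Opposite.op (ModuleCat.of ℤ G))).obj (ModuleCat.of ℤ ℤ)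

/-- The map `Ext¹(G, ℤ) → Ext¹(H, ℤ)` induced contravariantly by `f : H →+ G`. -/
noncomputable def extHom {H G : Type} [AddCommGroup H] [AddCommGroup G] (f : H →+ G) :
    ↥(Ext1 G) →+ ↥(Ext1 H) :=
  ((forget₂ (ModuleCat ℤ) AddCommGrpCat).map (show Ext1 G ⟶ Ext1 H from
    ((Ext ℤ (ModuleCat ℤ) 1).map
      (ModuleCat.ofHom f.toIntLinearMap).op).app (ModuleCat.of ℤ ℤ))).hom

open AddSubgroup in
/-- The `p`-rank of an abelian group `M`: the `ℤ/pℤ`-dimension of `M[p]`. -/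
noncomputable def pRank (p : ℕ) (M : Type*) [AddCommGroup M] : Cardinal :=
  letI := torsionBy.zmodModule (A := M) (n := p)
  Module.rank (ZMod p) (torsionBy M p)

/-- The torsion-free rank of an abelian group `M`: `dim_ℚ (ℚ ⊗_ℤ M)`. -/
noncomputable def qRank (M : Type*) [AddCommGroup M] : Cardinal :=
  Module.rank ℚ (ℚ ⊗[ℤ] M)

/-- `G →+ ZMod p` is a `ZMod p`-vector space. -/
noncomputable instance homModP (p : ℕ) (G : Type*) [AddCommGroup G] :
    Module (ZMod p) (G →+ ZMod p) :=
  AddCommGroup.zmodModule (by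
    intro f; ext x
    simp [AddMonoidHom.nsmul_apply, nsmul_eq_mul, ZMod.natCast_self])

/-- The image of `φ^p : Hom(G, ℤ) → Hom(G, ℤ/pℤ)` (as a `ZMod p`-subspace, namely the
span of the set-theoretic image, which coincides with the image). -/
noncomputable def phiSpan (p : ℕ) (G : Type*) [AddCommGroup G] :
    Submodule (ZMod p) (G →+ ZMod p) :=
  Submodule.span (ZMod p)
    (Set.range fun g : G →+ ℤ => (Int.castAddHom (ZMod p)).comp g)

/-- The first Ulm subgroup `p^ω G = ⋂ₙ pⁿG`. -/
def pOmega (p : ℕ) (G : Type*) [AddCommGroup G] : AddSubgroup G where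
  carrier := {x | ∀ n : ℕ, ∃ y : G, (p : ℤ) ^ n • y = x}
  zero_mem' := fun _ => ⟨0, smul_zero _⟩
  add_mem' := by
    rintro a b ha hb n
    obtain ⟨y, hy⟩ := ha n; obtain ⟨z, hz⟩ := hb n
    exact ⟨y + z, by rw [smul_add, hy, hz]⟩
  neg_mem' := by
    rintro a ha n
    obtain ⟨y, hy⟩ := ha n
    exact ⟨-y, by rw [smul_neg, hy]⟩

/-- A subgroup `H` of a torsion-free abelian group is pure iff `n • x ∈ H` implies `x ∈ H`
for nonzero `n`. -/
def IsPure {G : Type*} [AddCommGroup G] (H : AddSubgroup G) : Prop :=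
  ∀ (n : ℤ) (x : G), n ≠ 0 → n • x ∈ H → x ∈ H

/-- The `p`-closure `cl_p(G, H)` of a subgroup `H` of `G`. -/
def clp (p : ℕ) {G : Type*} [AddCommGroup G] (H : AddSubgroup G) : AddSubgroup G where
  carrier := {x | ∀ n : ℕ, ∃ y ∈ H, ∃ g : G, x - y = (p : ℤ) ^ n • g}
  zero_mem' := fun _ => ⟨0, H.zero_mem, 0, by simp⟩
  add_mem' := by
    rintro a b ha hb n
    obtain ⟨y, hy, g, hg⟩ := ha n; obtain ⟨z, hz, k, hk⟩ := hb n
    exact ⟨y + z, H.add_mem hy hz, g + k, by rw [add_sub_add_comm, hg, hk, smul_add]⟩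
  neg_mem' := by
    rintro a ha n
    obtain ⟨y, hy, g, hg⟩ := ha n
    exact ⟨-y, H.neg_mem hy, -g, by rw [smul_neg, ← hg]; abel⟩

/-- The Prüfer `p`-group, realized as the `p`-primary part of `ℚ/ℤ`. -/
def Prufer (p : ℕ) : AddSubgroup (ℚ ⧸ AddSubgroup.zmultiples (1 : ℚ)) where
  carrier := {x | ∃ n : ℕ, p ^ n • x = 0}
  zero_mem' := ⟨0, smul_zero _⟩
  add_mem' := by
    rintro a b ⟨m, hm⟩ ⟨k, hk⟩
    have ha : (p ^ m * p ^ k) • a = 0 := by rw [mul_nsmul, hm, smul_zero]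
    have hb : (p ^ m * p ^ k) • b = 0 := by rw [mul_comm, mul_nsmul, hk, smul_zero]
    exact ⟨m + k, by rw [smul_add, pow_add, ha, hb, add_zero]⟩
  neg_mem' := by
    rintro a ⟨n, hn⟩
    exact ⟨n, by rw [smul_neg, hn, neg_zero]⟩

/-- The `ℤ/pℤ`-dimension of `G/pG`. -/
noncomputable def modpRank (p : ℕ) (G : Type*) [AddCommGroup G] : Cardinal :=
  letI : Module (ZMod p) (G ⧸ ((p : ℤ) • (⊤ : Submodule ℤ G))) :=
    AddCommGroup.zmodModule (by
      intro x
      obtain ⟨g, rfl⟩ := Submodule.Quotient.mk_surjective _ x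
      rw [← Nat.cast_smul_eq_nsmul ℤ, ← Submodule.Quotient.mk_smul,
        Submodule.Quotient.mk_eq_zero]
      exact Submodule.smul_mem_pointwise_smul g _ ⊤ trivial)
  Module.rank (ZMod p) (G ⧸ ((p : ℤ) • (⊤ : Submodule ℤ G)))

section ExtAux
open CategoryTheory Limits
noncomputable section

lemma leftDerived_map_add' {C D : Type*} [Category C] [Category D] [Abelian C]
    [HasProjectiveResolutions C] [Abelian D]
    (F : C ⥤ D) [F.Additive] (n : ℕ) {X Y : C} (f g : X ⟶ Y) :
    (F.leftDerived n).map (f + g) = (F.leftDerived n).map f + (F.leftDerived n).map g := by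
  have P : ProjectiveResolution X := (HasProjectiveResolution.out (Z := X)).some
  have Q : ProjectiveResolution Y := (HasProjectiveResolution.out (Z := Y)).some
  rw [F.leftDerived_map_eq n f (ProjectiveResolution.lift f P Q) (ProjectiveResolution.lift_commutes f P Q),
      F.leftDerived_map_eq n g (ProjectiveResolution.lift g P Q) (ProjectiveResolution.lift_commutes g P Q),
      F.leftDerived_map_eq n (f + g) (ProjectiveResolution.lift f P Q + ProjectiveResolution.lift g P Q)
        (by rw [Preadditive.add_comp, ProjectiveResolution.lift_commutes, ProjectiveResolution.lift_commutes,
              Functor.map_add, Preadditive.comp_add]),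
      Functor.map_add, Preadditive.add_comp, Preadditive.comp_add]


lemma extMap_add {H G : Type} [AddCommGroup H] [AddCommGroup G] (f g : H →+ G) :
    (((Ext ℤ (ModuleCat ℤ) 1).map (ModuleCat.ofHom (f + g).toIntLinearMap).op).app (ModuleCat.of ℤ ℤ))
    = (((Ext ℤ (ModuleCat ℤ) 1).map (ModuleCat.ofHom f.toIntLinearMap).op).app (ModuleCat.of ℤ ℤ))
      + (((Ext ℤ (ModuleCat ℤ) 1).map (ModuleCat.ofHom g.toIntLinearMap).op).app (ModuleCat.of ℤ ℤ)) := by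
  show (((((linearYoneda ℤ (ModuleCat ℤ)).obj (ModuleCat.of ℤ ℤ)).rightOp).leftDerived 1).map
      (ModuleCat.ofHom f.toIntLinearMap + ModuleCat.ofHom g.toIntLinearMap)).unop = _
  rw [leftDerived_map_add']
  rfl

lemma extHom_add {H G : Type} [AddCommGroup H] [AddCommGroup G] (f g : H →+ G) :
    extHom (f + g) = extHom f + extHom g := by
  ext x
  show extHom (f + g) x = extHom f x + extHom g x
  unfold extHom
  rw [extMap_add]
  rfl

/-- `extHom` as an additive monoid hom in the morphism variable. -/
noncomputable def extHomHom (H G : Type) [AddCommGroup H] [AddCommGroup G] :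
    (H →+ G) →+ (↥(Ext1 G) →+ ↥(Ext1 H)) :=
  AddMonoidHom.mk' (fun f => extHom f) extHom_add

lemma extHom_zsmul_apply {H G : Type} [AddCommGroup H] [AddCommGroup G] (n : ℤ) (f : H →+ G)
    (x : ↥(Ext1 G)) : extHom (n • f) x = n • extHom f x := by
  have : extHom (n • f) = n • extHom f := map_zsmul (extHomHom H G) n f
  rw [this]
  rfl

lemma extHom_comp_apply {H K G : Type} [AddCommGroup H] [AddCommGroup K] [AddCommGroup G]
    (g : K →+ G) (f : H →+ K) (x : ↥(Ext1 G)) :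
    extHom (g.comp f) x = extHom f (extHom g x) := by
  unfold extHom
  have : ModuleCat.ofHom (g.comp f).toIntLinearMap
      = ModuleCat.ofHom f.toIntLinearMap ≫ ModuleCat.ofHom g.toIntLinearMap := rfl
  rw [this, op_comp, Functor.map_comp, NatTrans.comp_app]
  rfl

lemma extHom_id_apply {G : Type} [AddCommGroup G] (x : ↥(Ext1 G)) :
    extHom (AddMonoidHom.id G) x = x := by
  unfold extHom
  have : ModuleCat.ofHom (AddMonoidHom.id G).toIntLinearMap = 𝟙 (ModuleCat.of ℤ G) := rfl
  rw [this, op_id, CategoryTheory.Functor.map_id, NatTrans.id_app]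
  simp only [CategoryTheory.Functor.map_id]
  rfl

lemma ext1_eq_zero_of_free (Q : Type) [AddCommGroup Q] [Module.Free ℤ Q] (x : ↥(Ext1 Q)) :
    x = 0 := by
  have hproj : Projective (ModuleCat.of ℤ Q) :=
    ModuleCat.projective_of_free (Module.Free.chooseBasis ℤ Q)
  have hz : IsZero (((Ext ℤ (ModuleCat ℤ) 1).obj (Opposite.op (ModuleCat.of ℤ Q))).obj
      (ModuleCat.of ℤ ℤ)) := isZero_Ext_succ_of_projective (ModuleCat.of ℤ Q) (ModuleCat.of ℤ ℤ) 0
  have h : 𝟙 (Ext1 Q) = 0 := hz.eq_of_src _ _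
  calc x = (𝟙 (Ext1 Q) : Ext1 Q ⟶ Ext1 Q) x := rfl
    _ = (0 : Ext1 Q ⟶ Ext1 Q) x := by rw [h]
    _ = 0 := rfl

end
end ExtAux

/-- If `G/p^ωG` is free, then `G = p^ωG ⊕ F` with `F` free, and `Ext¹(G, ℤ)[p] = 0`. -/
theorem decomp_and_ext_p_torsion_eq_zero (G : Type) [AddCommGroup G] [NoZeroSMulDivisors ℤ G]
    (p : ℕ) (hp : p.Prime) (hfree : Module.Free ℤ (G ⧸ pOmega p G)) :
    (∃ F : AddSubgroup G, Module.Free ℤ ↥F ∧ IsCompl (pOmega p G) F) ∧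
      ∀ x : ↥(Ext1 G), (p : ℤ) • x = 0 → x = 0 := by
  haveI := hfree
  set D := pOmega p G with hD
  set Q := G ⧸ pOmega p G with hQ
  let π0 : G →+ Q := QuotientAddGroup.mk' (pOmega p G)
  have hπ0sur : Function.Surjective π0 := QuotientAddGroup.mk'_surjective _
  -- splitting
  obtain ⟨s, hs⟩ := Module.projective_lifting_property π0.toIntLinearMap
    (LinearMap.id : Q →ₗ[ℤ] Q) hπ0sur
  have hsec : ∀ q : Q, π0 (s q) = q := fun q => congrArg (fun f => f q) (congrArg (fun l => l.toFun) hs)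
  have hker : ∀ x : G, π0 x = 0 ↔ x ∈ pOmega p G := fun x => QuotientAddGroup.eq_zero_iff x
  let F : AddSubgroup G := s.toAddMonoidHom.range
  have hFfree : Module.Free ℤ ↥F := by
    have hinj : Function.Injective s.toAddMonoidHom := by
      intro a b hab
      have h := congrArg π0 hab
      rw [← hsec a, ← hsec b]
      exact h
    exact Module.Free.of_equiv
      (AddEquiv.ofBijective s.toAddMonoidHom.rangeRestrict
        ⟨fun a b hab => hinj (congrArg Subtype.val hab),
          AddMonoidHom.rangeRestrict_surjective _⟩).toIntLinearEquiv
  have hcompl : IsCompl (pOmega p G) F := by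
    constructor
    · rw [disjoint_iff_inf_le]
      rintro x ⟨hxD, q, rfl⟩
      have h0 : π0 (s q) = 0 := (hker (s q)).mpr hxD
      have : q = 0 := by rw [← hsec q]; exact h0
      simp [this]
    · rw [codisjoint_iff_le_sup]
      intro x _
      have h1 : x - s (π0 x) ∈ pOmega p G := by
        rw [← hker]
        simp [map_sub, hsec]
      have h2 : s (π0 x) ∈ F := ⟨π0 x, rfl⟩
      have : x = (x - s (π0 x)) + s (π0 x) := by abel
      rw [this]
      exact AddSubgroup.add_mem _ (AddSubgroup.mem_sup_left h1) (AddSubgroup.mem_sup_right h2)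
  refine ⟨⟨F, hFfree, hcompl⟩, ?_⟩
  -- Ext part
  intro x hx
  have hpne : (p : ℤ) ≠ 0 := by exact_mod_cast hp.ne_zero
  let ι : ↥(pOmega p G) →+ G := (pOmega p G).subtype
  let rraw : G →+ G := AddMonoidHom.id G - s.toAddMonoidHom.comp π0
  have hrmem : ∀ g : G, rraw g ∈ pOmega p G := by
    intro g
    rw [← hker]
    simp [rraw, map_sub, hsec]
  let r : G →+ ↥(pOmega p G) := rraw.codRestrict _ hrmem
  have hdecomp : AddMonoidHom.id G = ι.comp r + s.toAddMonoidHom.comp π0 := by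
    ext g
    show g = rraw g + s (π0 g)
    simp [rraw]
  -- x = extHom r (extHom ι x)
  have hx1 : x = extHom r (extHom ι x) := by
    conv_lhs => rw [← extHom_id_apply x, hdecomp]
    rw [extHom_add]
    show extHom (ι.comp r) x + extHom (s.toAddMonoidHom.comp π0) x = _
    rw [extHom_comp_apply, extHom_comp_apply,
      ext1_eq_zero_of_free Q (extHom s.toAddMonoidHom x), map_zero, add_zero]
  set y := extHom ι x with hy
  have hpy : (p : ℤ) • y = 0 := by rw [hy, ← map_zsmul, hx, map_zero]
  -- multiplication by p is an automorphism of D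
  have hinjG : ∀ a b : G, (p : ℤ) • a = (p : ℤ) • b → a = b := by
    intro a b hab
    exact smul_right_injective G hpne hab
  let mp : ↥(pOmega p G) →+ ↥(pOmega p G) := zsmulAddGroupHom (p : ℤ)
  have hmpbij : Function.Bijective mp := by
    constructor
    · intro a b hab
      have : (p : ℤ) • (a : G) = (p : ℤ) • (b : G) := by
        have := congrArg Subtype.val hab
        simpa [mp, zsmulAddGroupHom] using this
      exact Subtype.ext (hinjG _ _ this)
    · rintro ⟨d, hd⟩
      obtain ⟨z, hz⟩ := hd 1
      rw [pow_one] at hz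
      have hzmem : z ∈ pOmega p G := by
        intro n
        obtain ⟨w, hw⟩ := hd (n + 1)
        refine ⟨w, hinjG _ _ ?_⟩
        rw [hz, ← hw, pow_succ, mul_comm, mul_smul]
      refine ⟨⟨z, hzmem⟩, ?_⟩
      apply Subtype.ext
      simpa [mp, zsmulAddGroupHom] using hz
  let e : ↥(pOmega p G) ≃+ ↥(pOmega p G) := AddEquiv.ofBijective mp hmpbij
  have hmp_smul : mp = (p : ℤ) • AddMonoidHom.id ↥(pOmega p G) := by
    ext d
    simp [mp, zsmulAddGroupHom]
  have hy0 : y = 0 := by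
    have hcompe : e.toAddMonoidHom.comp e.symm.toAddMonoidHom = AddMonoidHom.id _ := by
      ext z; simp
    have h1 : y = extHom e.symm.toAddMonoidHom (extHom e.toAddMonoidHom y) := by
      rw [← extHom_comp_apply, hcompe, extHom_id_apply]
    have h2 : extHom e.toAddMonoidHom y = 0 := by
      have : e.toAddMonoidHom = mp := rfl
      rw [this, hmp_smul, extHom_zsmul_apply, extHom_id_apply]
      exact hpy
    rw [h1, h2, map_zero]
  rw [hx1, hy0, map_zero]
end

section
/- Let G be a torsion-free abelian group, p a prime, and H a pure subgroup of G. Define cl_p(G,H) = { x ∈ G : for all n ∈ ℕ there is y ∈ H with x − y ∈ p^nG }. Then H ⊆ cl_p(G,H), cl_p(G,H) is a pure subgroup of G, and the quotient cl_p(G,H)/H is p-divisible. -/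
open CategoryTheory
open scoped TensorProduct Pointwise

/-- Basic properties of the `p`-closure: `H ⊆ cl_p(G,H)`, `cl_p(G,H)` is pure, and
`cl_p(G,H)/H` is `p`-divisible. -/
theorem clp_le_pure_and_quotient_p_divisible (G : Type) [AddCommGroup G]
    [NoZeroSMulDivisors ℤ G] (p : ℕ) (hp : p.Prime) (H : AddSubgroup G) (hH : IsPure H) :
    H ≤ clp p H ∧ IsPure (clp p H) ∧
    ∀ x : ↥(clp p H) ⧸ (H.addSubgroupOf (clp p H)),
      ∃ y : ↥(clp p H) ⧸ (H.addSubgroupOf (clp p H)), p • y = x := by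
  have hpz : (p : ℤ) ≠ 0 := by exact_mod_cast hp.ne_zero
  have hle : H ≤ clp p H := fun x hx n => ⟨x, hx, 0, by simp⟩
  have lemA : ∀ m : ℤ, ¬ (p:ℤ) ∣ m → ∀ x : G, m • x ∈ clp p H → x ∈ clp p H := by
    intro m hm x hx j
    obtain ⟨y, hy, g, hg⟩ := hx j
    have hcop : IsCoprime ((p:ℤ)^j) m :=
      ((Nat.prime_iff_prime_int.mp hp).coprime_iff_not_dvd.mpr hm).pow_left
    obtain ⟨a, b, hab⟩ := hcop
    refine ⟨b • y, H.zsmul_mem hy b, a • x + b • g, ?_⟩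
    have h1 : x = (a * (p:ℤ)^j + b * m) • x := by rw [hab, one_smul]
    calc x - b • y = (a * (p:ℤ)^j + b * m) • x - b • y := by rw [← h1]
      _ = a • ((p:ℤ)^j • x) + b • (m • x - y) := by
          rw [add_smul, mul_smul, mul_smul, smul_sub]; abel
      _ = a • ((p:ℤ)^j • x) + b • ((p:ℤ)^j • g) := by rw [hg]
      _ = (p:ℤ)^j • (a • x + b • g) := by
          rw [smul_add, smul_comm a, smul_comm b]
  have lemB : ∀ x : G, (p:ℤ) • x ∈ clp p H → x ∈ clp p H := by
    intro x hx j
    obtain ⟨y, hy, g, hg⟩ := hx (j+1)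
    have hy' : (p:ℤ) • (x - (p:ℤ)^j • g) = y := by
      rw [smul_sub, smul_smul, ← pow_succ', ← hg]; abel
    have hxg : x - (p:ℤ)^j • g ∈ H := hH (p:ℤ) _ hpz (hy' ▸ hy)
    exact ⟨x - (p:ℤ)^j • g, hxg, g, by abel⟩
  have key : ∀ N : ℕ, ∀ n : ℤ, n.natAbs = N → n ≠ 0 → ∀ x, n • x ∈ clp p H → x ∈ clp p H := by
    intro N
    induction N using Nat.strong_induction_on with
    | _ N ih =>
      intro n hN hn x hx
      by_cases hdvd : (p:ℤ) ∣ n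
      · obtain ⟨m, rfl⟩ := hdvd
        have hm : m ≠ 0 := by rintro rfl; simp at hn
        have hmx : m • x ∈ clp p H := lemB _ (by rw [smul_smul]; exact hx)
        refine ih m.natAbs ?_ m rfl hm x hmx
        rw [← hN, Int.natAbs_mul, Int.natAbs_natCast]
        have : 1 ≤ m.natAbs := Nat.one_le_iff_ne_zero.mpr (Int.natAbs_ne_zero.mpr hm)
        exact lt_mul_of_one_lt_left (Nat.lt_of_lt_of_le Nat.zero_lt_one this) hp.one_lt
      · exact lemA n hdvd x hx
  have hpureK : IsPure (clp p H) := fun n x hn hx => key n.natAbs n rfl hn x hx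
  refine ⟨hle, hpureK, ?_⟩
  intro x
  obtain ⟨x, rfl⟩ := QuotientAddGroup.mk_surjective x
  obtain ⟨y0, hy0, g, hg0⟩ := x.2 1
  have hg : (x : G) - y0 = (p:ℤ) • g := by simpa using hg0
  have hgK : g ∈ clp p H := by
    refine hpureK (p:ℤ) g hpz ?_
    rw [← hg]
    exact (clp p H).sub_mem x.2 (hle hy0)
  refine ⟨QuotientAddGroup.mk ⟨g, hgK⟩, ?_⟩
  have : p • (QuotientAddGroup.mk (s := H.addSubgroupOf (clp p H)) ⟨g, hgK⟩)
      = QuotientAddGroup.mk (p • (⟨g, hgK⟩ : ↥(clp p H))) := rfl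
  rw [this, QuotientAddGroup.eq]
  show ((-(p • (⟨g, hgK⟩ : ↥(clp p H))) + x : ↥(clp p H)) : G) ∈ H
  have hcast : ((-(p • (⟨g, hgK⟩ : ↥(clp p H))) + x : ↥(clp p H)) : G) = (x : G) - (p:ℤ) • g := by
    push_cast
    rw [natCast_zsmul]
    abel
  have h2 : (x:G) - (p:ℤ) • g = y0 := by rw [← hg]; abel
  rw [hcast, h2]
  exact hy0
end

section
/- Let G be a torsion-free abelian group with fr-rk₀(G) := min{ rank(H) : H a pure subgroup of G with G/H free } finite or infinite with value λ. Then the torsion-free rank of Ext^1_ℤ(G,ℤ) is at most 2^{max(ℵ₀, λ)}. -/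
open CategoryTheory
open scoped TensorProduct Pointwise

namespace ExtCard
open CategoryTheory Limits
noncomputable section

def over' (X : ModuleCat.{0} ℤ) : ModuleCat.{0} ℤ := ModuleCat.of ℤ (↥X →₀ ℤ)

instance projective_over' (X : ModuleCat.{0} ℤ) : Projective (over' X) :=
  ModuleCat.projective_of_free (ι := ↥X) Finsupp.basisSingleOne

def π' (X : ModuleCat.{0} ℤ) : over' X ⟶ X :=
  ModuleCat.ofHom (@Finsupp.linearCombination ↥X ↥X ℤ _ _ X.isModule id)

instance epi_π' (X : ModuleCat.{0} ℤ) : Epi (π' X) :=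
  (ModuleCat.epi_iff_surjective _).2
    (@Finsupp.linearCombination_id_surjective ℤ _ ↥X _ X.isModule)

def d' {X Y : ModuleCat.{0} ℤ} (f : X ⟶ Y) : over' (kernel f) ⟶ X :=
  π' (kernel f) ≫ kernel.ι f

@[simp] lemma d'_comp {X Y : ModuleCat.{0} ℤ} (f : X ⟶ Y) : d' f ≫ f = 0 := by
  simp [d', Category.assoc, kernel.condition]

theorem exact_d'_f {X Y : ModuleCat.{0} ℤ} (f : X ⟶ Y) :
    (ShortComplex.mk (d' f) f (d'_comp f)).Exact := by
  let α : ShortComplex.mk (d' f) f (d'_comp f) ⟶ ShortComplex.mk (kernel.ι f) f (by simp) :=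
    { τ₁ := π' _
      τ₂ := 𝟙 _
      τ₃ := 𝟙 _ }
  have : Epi α.τ₁ := by dsimp; infer_instance
  have : IsIso α.τ₂ := by dsimp; infer_instance
  have : Mono α.τ₃ := by dsimp; infer_instance
  rw [ShortComplex.exact_iff_of_epi_of_isIso_of_mono α]
  exact ShortComplex.exact_of_f_is_kernel _ (kernelIsKernel f)

variable (Z P₀ : ModuleCat.{0} ℤ) (p : P₀ ⟶ Z)

def ofComplex : ChainComplex (ModuleCat.{0} ℤ) ℕ :=
  ChainComplex.mk' P₀ (over' (kernel p)) (d' p) (fun f => ⟨_, d' f, d'_comp f⟩)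

lemma ofComplex_d_1_0 : (ofComplex Z P₀ p).d 1 0 = d' p := by
  simp [ofComplex]

lemma ofComplex_exactAt_succ (n : ℕ) : (ofComplex Z P₀ p).ExactAt (n + 1) := by
  rw [HomologicalComplex.exactAt_iff' _ (n + 1 + 1) (n + 1) n (by simp) (by simp)]
  dsimp [ofComplex, HomologicalComplex.sc', HomologicalComplex.shortComplexFunctor',
      ChainComplex.mk', ChainComplex.mk]
  match n with
  | 0 => apply exact_d'_f
  | n + 1 =>
    have key : ∀ {A B C : ModuleCat.{0} ℤ} (f f' : A ⟶ B) (g g' : B ⟶ C) (w w'),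
        f' = f → g' = g → (ShortComplex.mk f g w).Exact → (ShortComplex.mk f' g' w').Exact := by
      intros; subst_vars; assumption
    refine key _ _ _ _ _ _ ?hf ?hg (exact_d'_f _)
    case hg => exact ChainComplex.of_d _ _ _
    case hf => exact ChainComplex.of_d _ _ _

instance projX [Projective P₀] (n : ℕ) : Projective ((ofComplex Z P₀ p).X n) := by
  obtain (_ | _ | _ | n) := n
  · exact (inferInstance : Projective P₀)
  · apply projective_over'
  · apply projective_over'
  · apply projective_over'

/-- An explicit projective resolution built from a chosen projective presentation. -/
def ofRes [Projective P₀] [Epi p] : ProjectiveResolution Z where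
  complex := ofComplex Z P₀ p
  π := (ChainComplex.toSingle₀Equiv _ _).symm ⟨p, by
          rw [ofComplex_d_1_0]; exact d'_comp p⟩
  quasiIso := ⟨fun n => by
    cases n
    · rw [ChainComplex.quasiIsoAt₀_iff, ShortComplex.quasiIso_iff_of_zeros']
      · refine (ShortComplex.exact_and_epi_g_iff_of_iso ?_).2
          ⟨exact_d'_f p, by dsimp; infer_instance⟩
        exact ShortComplex.isoMk (Iso.refl _) (Iso.refl _) (Iso.refl _)
          (by simp [ofComplex]; exact (Category.id_comp _).trans (Category.comp_id _).symm) (by simp; exact (Category.id_comp _).trans (Category.comp_id _).symm)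
      all_goals rfl
    · rw [quasiIsoAt_iff_exactAt']
      · apply ofComplex_exactAt_succ
      · apply ChainComplex.exactAt_succ_single_obj⟩

lemma card_eq_of_iso {A B : ModuleCat.{0} ℤ} (e : A ≅ B) : Cardinal.mk ↥A = Cardinal.mk ↥B :=
  Cardinal.mk_congr ((forget (ModuleCat ℤ)).mapIso e).toEquiv

lemma card_homology_le (K : CochainComplex (ModuleCat.{0} ℤ) ℕ) (i : ℕ) :
    Cardinal.mk ↥(K.homology i) ≤ Cardinal.mk ↥((K.sc i).X₂) := by
  rw [show K.homology i = (K.sc i).homology from rfl,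
    card_eq_of_iso ((K.sc i).moduleCatHomologyIso)]
  refine le_trans Cardinal.mk_quotient_le ?_
  exact Cardinal.mk_subtype_le _

/-- The key cardinality bound: `#Ext¹(Z, ℤ) ≤ ℵ₀ ^ #(kernel p)` for any projective
presentation `p : P₀ ⟶ Z`. -/
lemma card_Ext1_le (Z P₀ : ModuleCat.{0} ℤ) [Projective P₀] (p : P₀ ⟶ Z) [Epi p] :
    Cardinal.mk ↥(((Ext ℤ (ModuleCat ℤ) 1).obj (Opposite.op Z)).obj (ModuleCat.of ℤ ℤ)) ≤
      Cardinal.aleph0 ^ Cardinal.mk ↥(kernel p) := by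
  rw [card_eq_of_iso ((ofRes Z P₀ p).isoExt 1 (ModuleCat.of ℤ ℤ))]
  refine le_trans (card_homology_le _ 1) ?_
  have e2 : ↥((((ofRes Z P₀ p).complex.linearYonedaObj ℤ (ModuleCat.of ℤ ℤ)).sc 1).X₂)
      ≃ (↥(kernel p) → ℤ) :=
    ModuleCat.homEquiv.trans (@Finsupp.lift ℤ ℤ _ _ _ ↥(kernel p)).toEquiv.symm
  rw [Cardinal.mk_congr e2, ← Cardinal.mk_int, Cardinal.power_def]

lemma card_finsupp_int_le (α : Type) : Cardinal.mk (α →₀ ℤ) ≤ max Cardinal.aleph0 (Cardinal.mk α) := by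
  cases finite_or_infinite α with
  | inl h => exact le_trans Cardinal.mk_le_aleph0 (le_max_left _ _)
  | inr h =>
      rw [Cardinal.mk_finsupp_of_infinite α ℤ, Cardinal.mk_int]
      exact max_le (le_max_right _ _) (le_max_left _ _)

lemma card_finsupp_rat_le (α : Type) : Cardinal.mk (α →₀ ℚ) ≤ max Cardinal.aleph0 (Cardinal.mk α) := by
  cases finite_or_infinite α with
  | inl h => exact le_trans Cardinal.mk_le_aleph0 (le_max_left _ _)
  | inr h =>
      rw [Cardinal.mk_finsupp_of_infinite α ℚ, Cardinal.mk_denumerable ℚ]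
      exact max_le (le_max_right _ _) (le_max_left _ _)

lemma qRank_le_mk (M : Type) [AddCommGroup M] : qRank M ≤ Cardinal.mk M := by
  have hspan : Submodule.span ℚ (Set.range fun m : M => (1 : ℚ) ⊗ₜ[ℤ] m) = ⊤ := by
    rw [Submodule.eq_top_iff']
    intro x
    induction x using TensorProduct.induction_on with
    | zero => exact zero_mem _
    | tmul q m =>
        have hq : q ⊗ₜ[ℤ] m = q • ((1 : ℚ) ⊗ₜ[ℤ] m) := by
          rw [TensorProduct.smul_tmul', smul_eq_mul, mul_one]
        rw [hq]
        exact Submodule.smul_mem _ _ (Submodule.subset_span ⟨m, rfl⟩)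
    | add x y hx hy => exact add_mem hx hy
  have h1 : qRank M = Module.rank ℚ
      (Submodule.span ℚ (Set.range fun m : M => (1 : ℚ) ⊗ₜ[ℤ] m)) := by
    rw [hspan, rank_top]; rfl
  rw [h1]
  exact le_trans (rank_span_le _) Cardinal.mk_range_le

end

end ExtCard

/-- If `fr-rk₀(G) = λ`, then the torsion-free rank of `Ext¹(G, ℤ)` is at most
`2^max(ℵ₀, λ)`. -/
theorem qRank_ext_le_of_free_rank (G : Type) [AddCommGroup G] [NoZeroSMulDivisors ℤ G]
    (lam : Cardinal)
    (h1 : ∃ H : AddSubgroup G, IsPure H ∧ Module.Free ℤ (G ⧸ H) ∧ qRank ↥H = lam)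
    (h2 : ∀ H : AddSubgroup G, IsPure H → Module.Free ℤ (G ⧸ H) → lam ≤ qRank ↥H) :
    qRank ↥(Ext1 G) ≤ 2 ^ max Cardinal.aleph0 lam := by
  classical
  obtain ⟨H, -, hfree, hrank⟩ := h1
  haveI : Module.Free ℤ (G ⧸ H) := hfree
  -- a ℤ-linear section of the quotient map
  let mkq : G →ₗ[ℤ] (G ⧸ H) := (QuotientAddGroup.mk' H).toIntLinearMap
  obtain ⟨s, hs⟩ := Module.projective_lifting_property mkq LinearMap.id
    (QuotientAddGroup.mk'_surjective H)
  have hs' : ∀ y, mkq (s y) = y := fun y => congrArg (fun f => f y) hs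
  let lc0 : (↥H →₀ ℤ) →ₗ[ℤ] ↥H := Finsupp.linearCombination ℤ id
  let lcH : (↥H →₀ ℤ) →ₗ[ℤ] G := H.subtype.toIntLinearMap ∘ₗ lc0
  let ψ : ((↥H →₀ ℤ) × (G ⧸ H)) →ₗ[ℤ] G := lcH.coprod s
  have hmem : ∀ a, lcH a ∈ H := fun a => (lc0 a).2
  have hmkqH : ∀ x, x ∈ H → mkq x = 0 := fun x hx => (QuotientAddGroup.eq_zero_iff x).2 hx
  have hψ : ∀ a f, ψ (a, f) = lcH a + s f := fun a f => rfl
  have hsurj : Function.Surjective ψ := by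
    intro x
    have hx : x - s (mkq x) ∈ H := by
      have h0 : mkq (x - s (mkq x)) = 0 := by rw [map_sub, hs' (mkq x), sub_self]
      exact (QuotientAddGroup.eq_zero_iff _).1 h0
    refine ⟨(Finsupp.single (⟨x - s (mkq x), hx⟩ : ↥H) 1, mkq x), ?_⟩
    rw [hψ]
    have h1 : lcH (Finsupp.single (⟨x - s (mkq x), hx⟩ : ↥H) 1)
        = x - s (mkq x) := by
      show (H.subtype.toIntLinearMap) (lc0 (Finsupp.single _ 1)) = _
      rw [show lc0 (Finsupp.single (⟨x - s (mkq x), hx⟩ : ↥H) 1)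
        = (1 : ℤ) • (⟨x - s (mkq x), hx⟩ : ↥H) from Finsupp.linearCombination_single ℤ _ _]
      simp
    rw [h1]
    abel
  have hker0 : ∀ a f, ψ (a, f) = 0 → f = 0 := by
    intro a f h0
    have h1 : mkq (ψ (a, f)) = 0 := by rw [h0, map_zero]
    rw [hψ, map_add, hmkqH _ (hmem a), hs' f, zero_add] at h1
    exact h1
  -- categorical presentation
  let P₀ : ModuleCat.{0} ℤ := ModuleCat.of ℤ ((↥H →₀ ℤ) × (G ⧸ H))
  haveI : Projective P₀ := (IsProjective.iff_projective _).1
    (inferInstance : Module.Projective ℤ ((↥H →₀ ℤ) × (G ⧸ H)))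
  let p : P₀ ⟶ ModuleCat.of ℤ G := ModuleCat.ofHom ψ
  haveI : Epi p := (ModuleCat.epi_iff_surjective p).2 hsurj
  have hE := ExtCard.card_Ext1_le (ModuleCat.of ℤ G) P₀ p
  -- cardinality of the kernel
  have hk1 : Cardinal.mk ↥(CategoryTheory.Limits.kernel p) = Cardinal.mk ↥(LinearMap.ker ψ) :=
    ExtCard.card_eq_of_iso (ModuleCat.kernelIsoKer p)
  have hk2 : Cardinal.mk ↥(LinearMap.ker ψ) ≤ Cardinal.mk (↥H →₀ ℤ) := by
    refine Cardinal.mk_le_of_injective (f := fun k : ↥(LinearMap.ker ψ) => k.1.1) ?_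
    rintro ⟨⟨a, f⟩, hk⟩ ⟨⟨a', f'⟩, hk'⟩ hfst
    have ha : a = a' := hfst
    have hf : f = 0 := hker0 a f (LinearMap.mem_ker.1 hk)
    have hf' : f' = 0 := hker0 a' f' (LinearMap.mem_ker.1 hk')
    apply Subtype.ext
    exact Prod.ext ha (hf.trans hf'.symm)
  -- cardinality of H
  haveI : NoZeroSMulDivisors ℤ ↥H := by
    refine ⟨fun {c x} hcx => ?_⟩
    have h1 : c • (x : G) = 0 := by
      have h2 := map_smul H.subtype.toIntLinearMap c x
      rw [hcx, map_zero] at h2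
      exact h2.symm
    rcases smul_eq_zero.1 h1 with hc | hx0
    · exact Or.inl hc
    · exact Or.inr (Subtype.ext hx0)
  let gH : ↥H →ₗ[ℤ] ℚ ⊗[ℤ] ↥H := (TensorProduct.mk ℤ ℚ ↥H) 1
  haveI : IsLocalizedModule (nonZeroDivisors ℤ) gH :=
    (isLocalizedModule_iff_isBaseChange (nonZeroDivisors ℤ) ℚ gH).2
      (TensorProduct.isBaseChange ℤ ↥H ℚ)
  have hginj : Function.Injective gH := by
    rw [injective_iff_map_eq_zero]
    intro x hx
    obtain ⟨t, ht⟩ := (IsLocalizedModule.eq_zero_iff (nonZeroDivisors ℤ) gH).1 hx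
    have ht' : (t : ℤ) • x = 0 := ht
    rcases smul_eq_zero.1 ht' with h1 | h2
    · exact absurd h1 (nonZeroDivisors.coe_ne_zero t)
    · exact h2
  have hHle : Cardinal.mk ↥H ≤ Cardinal.mk (ℚ ⊗[ℤ] ↥H) := Cardinal.mk_le_of_injective hginj
  have hV : Cardinal.mk (ℚ ⊗[ℤ] ↥H) ≤ max Cardinal.aleph0 lam := by
    let b := Module.Basis.ofVectorSpace ℚ (ℚ ⊗[ℤ] ↥H)
    rw [Cardinal.mk_congr b.repr.toEquiv]
    refine (ExtCard.card_finsupp_rat_le _).trans ?_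
    have hι : Cardinal.mk ↥(Module.Basis.ofVectorSpaceIndex ℚ (ℚ ⊗[ℤ] ↥H)) = lam := by
      rw [b.mk_eq_rank'']
      exact hrank
    rw [hι]
  have hkerle : Cardinal.mk ↥(CategoryTheory.Limits.kernel p) ≤ max Cardinal.aleph0 lam := by
    rw [hk1]
    refine hk2.trans ((ExtCard.card_finsupp_int_le _).trans ?_)
    exact max_le (le_max_left _ _) (le_trans (hHle.trans hV) (max_le (le_max_left _ _) (le_max_right _ _)))
  calc qRank ↥(Ext1 G) ≤ Cardinal.mk ↥(Ext1 G) := ExtCard.qRank_le_mk _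
    _ ≤ Cardinal.aleph0 ^ Cardinal.mk ↥(CategoryTheory.Limits.kernel p) := hE
    _ ≤ Cardinal.aleph0 ^ max Cardinal.aleph0 lam :=
        Cardinal.power_le_power_left Cardinal.aleph0_ne_zero hkerle
    _ ≤ (2 ^ Cardinal.aleph0) ^ max Cardinal.aleph0 lam :=
        Cardinal.power_le_power_right (Cardinal.cantor _).le
    _ = 2 ^ (Cardinal.aleph0 * max Cardinal.aleph0 lam) := Cardinal.power_mul.symm
    _ = 2 ^ max Cardinal.aleph0 lam := by
        rw [Cardinal.mul_eq_right (le_max_left _ _) (le_max_left _ _) Cardinal.aleph0_ne_zero]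
end

section
/- Let G be an abelian group, H ≤ G, p a prime, and suppose: (a) f : H → ℤ/pℤ and g : H → ℤ are homomorphisms with f = (reduction mod p) ∘ g; (b) there exist homomorphisms h⁰ = 0 and h¹ : G → ℤ/pℤ agreeing on H (i.e. h¹↾H = 0) such that there are no homomorphisms g⁰, g¹ : G → ℤ with g⁰↾H = g¹↾H, h⁰ = (mod p)∘g⁰ and h¹ = (mod p)∘g¹; (c) ℤ/pℤ is injective with respect to the inclusion H ⊆ G (every homomorphism H → ℤ/pℤ extends to G). Then there exists a homomorphism f̃ : G → ℤ/pℤ extending f such that no homomorphism g̃ : G → ℤ extends g with f̃ = (mod p) ∘ g̃. -/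
open CategoryTheory
open scoped TensorProduct Pointwise

/-- Property (U): the unextendability step. -/
theorem property_U (G : Type) [AddCommGroup G] (H : AddSubgroup G) (p : ℕ) (hp : p.Prime)
    (f : ↥H →+ ZMod p) (g : ↥H →+ ℤ) (hfg : f = (Int.castAddHom (ZMod p)).comp g)
    (h1 : G →+ ZMod p) (h1H : ∀ x : ↥H, h1 ↑x = 0)
    (hbad : ¬ ∃ g0 g1 : G →+ ℤ, (∀ x : ↥H, g0 ↑x = g1 ↑x) ∧
      (Int.castAddHom (ZMod p)).comp g0 = 0 ∧ (Int.castAddHom (ZMod p)).comp g1 = h1)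
    (hinj : ∀ φ : ↥H →+ ZMod p, ∃ ψ : G →+ ZMod p, ∀ x : ↥H, ψ ↑x = φ x) :
    ∃ ftil : G →+ ZMod p, (∀ x : ↥H, ftil ↑x = f x) ∧
      ¬ ∃ gtil : G →+ ℤ, (∀ x : ↥H, gtil ↑x = g x) ∧
        (Int.castAddHom (ZMod p)).comp gtil = ftil := by
  obtain ⟨fhat, hfhat⟩ := hinj f
  by_cases hcase : ∃ ghat : G →+ ℤ, (∀ x : ↥H, ghat ↑x = g x) ∧
      (Int.castAddHom (ZMod p)).comp ghat = fhat
  · obtain ⟨ghat, hghatH, hghat⟩ := hcase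
    refine ⟨fhat - h1, fun x => by simp [hfhat x, h1H x], ?_⟩
    rintro ⟨gtil, gtilH, hgtil⟩
    exact hbad ⟨0, ghat - gtil, fun x => by simp [hghatH x, gtilH x], by ext x; simp,
      by rw [AddMonoidHom.comp_sub, hghat, hgtil]; abel⟩
  · exact ⟨fhat, hfhat, hcase⟩
end

section
/- Let L = ⊕_{α<μ} ℤx_α be free abelian, p a prime, and let G be generated by L together with elements y_n (n ∈ ω) subject to the relations c_n · y_{n+1} = y_n + x_{ν(n)} − x_{ρ(n)}, where c_n are positive integers and ν, ρ : ω → μ with ν(n) ≠ ρ(n) for all n and all values ν(n), ρ(n) pairwise distinct. Suppose g : L → ℤ is a homomorphism such that there exist N ∈ ω and integers b_m (m ≥ N) with c_m · b_{m+1} = b_m + g(x_{ν(m)}) − g(x_{ρ(m)}) for all m ≥ N. Then g extends to a homomorphism g' : G → ℤ. -/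
open CategoryTheory
open scoped TensorProduct Pointwise

/-- The subgroup of relations `c n • y (n+1) = y n + x (ν n) - x (ρ n)` in the free
abelian group on generators `x_α` (`α < μ`) and `y_n` (`n ∈ ω`). -/
def relSub (μ : Type) (c : ℕ → ℤ) (ν ρ : ℕ → μ) :
    AddSubgroup (FreeAbelianGroup (μ ⊕ ℕ)) :=
  AddSubgroup.closure {z | ∃ n : ℕ,
    z = c n • FreeAbelianGroup.of (Sum.inr (n + 1)) -
        (FreeAbelianGroup.of (Sum.inr n) + FreeAbelianGroup.of (Sum.inl (ν n)) -
          FreeAbelianGroup.of (Sum.inl (ρ n)))}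

/-- Downward recursion auxiliary: `faux k` is the value at index `N - k`. -/
def faux {μ : Type} (c : ℕ → ℤ) (ν ρ : ℕ → μ) (g : μ → ℤ) (N : ℕ) (bN : ℤ) : ℕ → ℤ
  | 0 => bN
  | (k+1) => c (N - (k+1)) * faux c ν ρ g N bN k - g (ν (N - (k+1))) + g (ρ (N - (k+1)))

/-- The extension step in the proof of Theorem 5.3: a homomorphism `g : L → ℤ` admitting
an eventual solution `b` of the divisibility recursion extends to the presented group. -/
theorem extension_of_eventual_solution (μ : Type) (c : ℕ → ℤ) (hc : ∀ n, 0 < c n)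
    (ν ρ : ℕ → μ) (hν : Function.Injective ν) (hρ : Function.Injective ρ)
    (hνρ : ∀ n m : ℕ, ν n ≠ ρ m)
    (g : μ → ℤ) (N : ℕ) (b : ℕ → ℤ)
    (hb : ∀ m, N ≤ m → c m * b (m + 1) = b m + g (ν m) - g (ρ m)) :
    ∃ g' : (FreeAbelianGroup (μ ⊕ ℕ) ⧸ relSub μ c ν ρ) →+ ℤ,
      ∀ α : μ, g' (QuotientAddGroup.mk (FreeAbelianGroup.of (Sum.inl α))) = g α := by
  classical
  set B : ℕ → ℤ := fun m => if N ≤ m then b m else faux c ν ρ g N (b N) (N - m) with hB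
  have hrec : ∀ m : ℕ, c m * B (m + 1) = B m + g (ν m) - g (ρ m) := by
    intro m
    by_cases h : N ≤ m
    · have h1 : N ≤ m + 1 := le_trans h (Nat.le_succ m)
      simp only [hB, if_pos h, if_pos h1]
      exact hb m h
    · push_neg at h
      have hm : ¬ N ≤ m := not_le.mpr h
      have hNm : N - m = (N - (m + 1)) + 1 := by omega
      have hm' : N - ((N - (m+1)) + 1) = m := by omega
      have hBm : B m = c m * faux c ν ρ g N (b N) (N - (m+1)) - g (ν m) + g (ρ m) := by
        simp only [hB, if_neg hm, hNm, faux, hm']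
      have hBm1 : B (m + 1) = faux c ν ρ g N (b N) (N - (m+1)) := by
        by_cases h1 : N ≤ m + 1
        · have h2 : m + 1 = N := by omega
          subst h2
          simp [hB, faux]
        · simp [hB, if_neg h1]
      rw [hBm, hBm1]; ring
  set F : FreeAbelianGroup (μ ⊕ ℕ) →+ ℤ :=
    FreeAbelianGroup.lift (Sum.elim g B) with hF
  have hker : relSub μ c ν ρ ≤ F.ker := by
    rw [relSub, AddSubgroup.closure_le]
    rintro z ⟨n, rfl⟩
    simp only [SetLike.mem_coe, AddMonoidHom.mem_ker, map_sub, map_add, map_zsmul, hF,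
      FreeAbelianGroup.lift_apply_of, Sum.elim_inl, Sum.elim_inr]
    have := hrec n
    rw [smul_eq_mul]
    omega
  refine ⟨QuotientAddGroup.lift _ F hker, fun α => ?_⟩
  simp [hF, FreeAbelianGroup.lift_apply_of]
end
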